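/- Let $U_1, U_2 \subseteq \mathbb{R}^p$ be linear subspaces, $\theta \in (0,2)$, and $v^0 \in \mathbb{R}^p$. The shadow sequence $x_1^{k} = P_{U_1}(v^{k-1})$ of the relaxed Douglas–Rachford iteration started at $v^0$ converges to $x^* = P_{U_1 \cap U_2}(v^0)$; that is, the Douglas–Rachford algorithm solves the best approximation problem of projecting $v^0$ onto $U_1 \cap U_2$. -/

import Mathlib

open Filter Topology

noncomputable def proj {p : ℕ} (U : Submodule ℝ (EuclideanSpace ℝ (Fin p)))
    (v : EuclideanSpace ℝ (Fin p)) : EuclideanSpace ℝ (Fin p) :=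
  (U.orthogonalProjection v : EuclideanSpace ℝ (Fin p))

/-!
With the reflections `Rᵢ = 2 P_{Uᵢ} - I`, one relaxed Douglas–Rachford step is
`v ↦ (1 - θ/2) v + (θ/2) R₂ R₁ v`, the average `T` of the identity and the linear isometry
`Q = R₂ R₁`. Such an average fixes `Fix Q`, preserves its orthogonal complement, and strictly
shrinks every nonzero vector there, because `‖T w‖² = ‖w‖² - t (1 - t) ‖Q w - w‖²`; by
compactness of the unit sphere it is a uniform contraction on `(Fix Q)ᗮ`, so `vᵏ → P_{Fix Q} v⁰`.
Finally `Fix Q = {x | P_{U₁} x = P_{U₂} x}`, so `P_{U₁}` maps `Fix Q` into `U₁ ⊓ U₂ ⊆ Fix Q`, and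
hence `P_{U₁} ∘ P_{Fix Q} = P_{U₁ ⊓ U₂}`.
-/

open Submodule

theorem proj_eq_starProjection {p : ℕ} (U : Submodule ℝ (EuclideanSpace ℝ (Fin p)))
    (v : EuclideanSpace ℝ (Fin p)) : proj U v = U.starProjection v := rfl

theorem ContinuousLinearMap.opNorm_lt_one_of_norm_apply_lt {V : Type*} [NormedAddCommGroup V]
    [NormedSpace ℝ V] [FiniteDimensional ℝ V] (S : V →L[ℝ] V)
    (hS : ∀ x, x ≠ 0 → ‖S x‖ < ‖x‖) : ‖S‖ < 1 := by
  nontriviality V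
  obtain ⟨x₀, hx₀, hmax⟩ := (isCompact_sphere (0 : V) 1).exists_isMaxOn
    (NormedSpace.sphere_nonempty.2 zero_le_one) S.continuous.norm.continuousOn
  have hx₀1 : ‖x₀‖ = 1 := by simpa using hx₀
  calc ‖S‖ ≤ ‖S x₀‖ :=
        S.opNorm_le_of_unit_norm (norm_nonneg _) fun x hx => hmax (by simpa using hx)
    _ < 1 := hx₀1 ▸ hS x₀ (norm_ne_zero_iff.1 (hx₀1 ▸ one_ne_zero))

section InnerProductSpace

variable {E : Type*} [NormedAddCommGroup E] [InnerProductSpace ℝ E]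

theorem exists_lt_one_forall_mem_norm_apply_le [FiniteDimensional ℝ E] (T : E →L[ℝ] E)
    (K : Submodule ℝ E) (hT : ∀ x ∈ K, x ≠ 0 → ‖T x‖ < ‖x‖) :
    ∃ c, 0 ≤ c ∧ c < 1 ∧ ∀ x ∈ K, ‖T x‖ ≤ c * ‖x‖ := by
  -- `T ∘ P_K` agrees with `T` on `K` and strictly shrinks every nonzero vector of `E`.
  set S := T ∘L K.starProjection
  refine ⟨‖S‖, norm_nonneg _, S.opNorm_lt_one_of_norm_apply_lt fun x hx => ?_, fun x hx => ?_⟩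
  · by_cases hPx : K.starProjection x = 0
    · simpa [S, hPx] using hx
    · exact (hT _ (K.starProjection_apply_mem x) hPx).trans_le (K.norm_starProjection_apply_le x)
  · simpa [S, starProjection_eq_self_iff.2 hx] using S.le_opNorm x

theorem tendsto_iterate_starProjection_of_contracting_orthogonal [FiniteDimensional ℝ E]
    (T : E →L[ℝ] E) (K : Submodule ℝ E) (hfix : ∀ x ∈ K, T x = x)
    (hmaps : ∀ x ∈ Kᗮ, T x ∈ Kᗮ) (hlt : ∀ x ∈ Kᗮ, x ≠ 0 → ‖T x‖ < ‖x‖) (v : E) :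
    Tendsto (fun k => T^[k] v) atTop (𝓝 (K.starProjection v)) := by
  obtain ⟨c, hc0, hc1, hc⟩ := exists_lt_one_forall_mem_norm_apply_le T Kᗮ hlt
  set w := Kᗮ.starProjection v
  have hsplit : ∀ k, T^[k] v = K.starProjection v + T^[k] w := fun k => by
    conv_lhs => rw [← K.starProjection_add_starProjection_orthogonal v]
    rw [iterate_map_add, Function.iterate_fixed (hfix _ (K.starProjection_apply_mem v))]
  have hdecay : ∀ k, T^[k] w ∈ Kᗮ ∧ ‖T^[k] w‖ ≤ c ^ k * ‖w‖ := fun k => by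
    induction k with
    | zero => exact ⟨Kᗮ.starProjection_apply_mem v, by simp⟩
    | succ k ih =>
      rw [Function.iterate_succ_apply', pow_succ', mul_assoc]
      exact ⟨hmaps _ ih.1, (hc _ ih.1).trans (mul_le_mul_of_nonneg_left ih.2 hc0)⟩
  have hw : Tendsto (fun k => T^[k] w) atTop (𝓝 0) :=
    squeeze_zero_norm (fun k => (hdecay k).2) <| by
      simpa using (tendsto_pow_atTop_nhds_zero_of_lt_one hc0 hc1).mul_const ‖w‖
  simpa [hsplit] using tendsto_const_nhds.add hw

end InnerProductSpace

section AveragedIsometry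

variable {E : Type*} [NormedAddCommGroup E] [InnerProductSpace ℝ E]

noncomputable def averagedMap (Q : E ≃ₗᵢ[ℝ] E) (t : ℝ) : E →L[ℝ] E :=
  (1 - t) • ContinuousLinearMap.id ℝ E + t • (Q.toContinuousLinearEquiv : E →L[ℝ] E)

def fixedSubmodule (Q : E ≃ₗᵢ[ℝ] E) : Submodule ℝ E :=
  LinearMap.eqLocus (Q.toLinearEquiv : E →ₗ[ℝ] E) LinearMap.id

variable (Q : E ≃ₗᵢ[ℝ] E)

theorem averagedMap_apply (t : ℝ) (x : E) : averagedMap Q t x = (1 - t) • x + t • Q x := rfl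

theorem mem_fixedSubmodule {x : E} : x ∈ fixedSubmodule Q ↔ Q x = x := Iff.rfl

theorem norm_averagedMap_apply_sq (t : ℝ) (x : E) :
    ‖averagedMap Q t x‖ ^ 2 = ‖x‖ ^ 2 - t * (1 - t) * ‖Q x - x‖ ^ 2 := by
  rw [averagedMap_apply, norm_add_sq_real, norm_sub_sq_real, real_inner_smul_left,
    real_inner_smul_right, norm_smul, norm_smul, Q.norm_map, real_inner_comm (Q x) x]
  simp only [mul_pow, Real.norm_eq_abs, sq_abs]
  ring

theorem averagedMap_apply_of_mem_fixedSubmodule (t : ℝ) {x : E} (hx : x ∈ fixedSubmodule Q) :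
    averagedMap Q t x = x := by
  rw [averagedMap_apply, (mem_fixedSubmodule Q).1 hx, ← add_smul, sub_add_cancel, one_smul]

theorem apply_mem_orthogonal_fixedSubmodule {x : E} (hx : x ∈ (fixedSubmodule Q)ᗮ) :
    Q x ∈ (fixedSubmodule Q)ᗮ := fun u hu => by
  rw [← (mem_fixedSubmodule Q).1 hu, Q.inner_map_map]
  exact hx u hu

theorem averagedMap_mem_orthogonal_fixedSubmodule (t : ℝ) {x : E}
    (hx : x ∈ (fixedSubmodule Q)ᗮ) : averagedMap Q t x ∈ (fixedSubmodule Q)ᗮ :=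
  add_mem (smul_mem _ _ hx) (smul_mem _ _ (apply_mem_orthogonal_fixedSubmodule Q hx))

theorem norm_averagedMap_apply_lt {t : ℝ} (ht : t ∈ Set.Ioo 0 1) {x : E}
    (hx : x ∈ (fixedSubmodule Q)ᗮ) (hx0 : x ≠ 0) : ‖averagedMap Q t x‖ < ‖x‖ := by
  have hQx : Q x - x ≠ 0 := fun h => hx0 <|
    (fixedSubmodule Q).inf_orthogonal_eq_bot.le ⟨sub_eq_zero.1 h, hx⟩
  have hpos : 0 < t * (1 - t) * ‖Q x - x‖ ^ 2 :=
    mul_pos (mul_pos ht.1 (sub_pos.2 ht.2)) (pow_pos (norm_pos_iff.2 hQx) 2)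
  refine lt_of_pow_lt_pow_left₀ 2 (norm_nonneg x) ?_
  rw [norm_averagedMap_apply_sq]
  linarith

theorem tendsto_iterate_averagedMap [FiniteDimensional ℝ E] {t : ℝ} (ht : t ∈ Set.Ioo 0 1) (v : E) :
    Tendsto (fun k => (averagedMap Q t)^[k] v) atTop
      (𝓝 ((fixedSubmodule Q).starProjection v)) :=
  tendsto_iterate_starProjection_of_contracting_orthogonal _ _
    (fun _ => averagedMap_apply_of_mem_fixedSubmodule Q t)
    (fun _ => averagedMap_mem_orthogonal_fixedSubmodule Q t)
    (fun _ => norm_averagedMap_apply_lt Q ht) v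

end AveragedIsometry

section DouglasRachford

variable {E : Type*} [NormedAddCommGroup E] [InnerProductSpace ℝ E]
  (U₁ U₂ : Submodule ℝ E) [U₁.HasOrthogonalProjection] [U₂.HasOrthogonalProjection]

theorem averagedMap_reflection_trans_reflection_apply (θ : ℝ) (x : E) :
    averagedMap ((reflection U₁).trans (reflection U₂)) (θ / 2) x =
      x + θ • (U₂.starProjection ((2 : ℝ) • U₁.starProjection x - x) - U₁.starProjection x) := by
  simp only [averagedMap_apply, LinearIsometryEquiv.trans_apply, reflection_apply,
    two_smul, map_sub, map_add, smul_sub, smul_add]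
  module

theorem reflection_reflection_eq_self_iff (x : E) :
    reflection U₂ (reflection U₁ x) = x ↔ U₁.starProjection x = U₂.starProjection x := by
  rw [← (reflection U₂).injective.eq_iff, reflection_reflection, reflection_apply,
    reflection_apply, sub_left_inj, ← Nat.cast_smul_eq_nsmul ℝ, ← Nat.cast_smul_eq_nsmul ℝ]
  exact smul_right_inj two_ne_zero

theorem starProjection_starProjection_eq_of_le {A F U : Submodule ℝ E}
    [A.HasOrthogonalProjection] [F.HasOrthogonalProjection] [U.HasOrthogonalProjection]
    (hAU : A ≤ U) (hAF : A ≤ F) (hFA : ∀ x ∈ F, U.starProjection x ∈ A) (v : E) :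
    U.starProjection (F.starProjection v) = A.starProjection v := by
  refine (eq_starProjection_of_mem_orthogonal (hFA _ (F.starProjection_apply_mem v)) ?_).symm
  rw [← sub_add_sub_cancel v (F.starProjection v)]
  exact add_mem (orthogonal_le hAF (F.sub_starProjection_mem_orthogonal v))
    (orthogonal_le hAU (U.sub_starProjection_mem_orthogonal _))

theorem starProjection_inf_eq_starProjection_fixedSubmodule
    [(U₁ ⊓ U₂).HasOrthogonalProjection]
    [(fixedSubmodule ((reflection U₁).trans (reflection U₂))).HasOrthogonalProjection] (v : E) :
    (U₁ ⊓ U₂).starProjection v = U₁.starProjection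
      ((fixedSubmodule ((reflection U₁).trans (reflection U₂))).starProjection v) := by
  have hfix : ∀ x, x ∈ fixedSubmodule ((reflection U₁).trans (reflection U₂)) ↔
      U₁.starProjection x = U₂.starProjection x :=
    reflection_reflection_eq_self_iff U₁ U₂
  refine (starProjection_starProjection_eq_of_le inf_le_left (fun x hx => ?_)
    (fun x hx => ?_) v).symm
  · rw [hfix, starProjection_eq_self_iff.2 hx.1, starProjection_eq_self_iff.2 hx.2]
  · exact ⟨U₁.starProjection_apply_mem x, (hfix x).1 hx ▸ U₂.starProjection_apply_mem x⟩

end DouglasRachford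

theorem stmt2 {p : ℕ} (U₁ U₂ : Submodule ℝ (EuclideanSpace ℝ (Fin p)))
    (θ : ℝ) (hθ : θ ∈ Set.Ioo (0 : ℝ) 2)
    (v x₁ : ℕ → EuclideanSpace ℝ (Fin p))
    (hx₁ : ∀ k, x₁ (k + 1) = proj U₁ (v k))
    (hv : ∀ k, v (k + 1) =
      v k + θ • (proj U₂ ((2 : ℝ) • proj U₁ (v k) - v k) - proj U₁ (v k))) :
    Tendsto x₁ atTop (𝓝 (proj (U₁ ⊓ U₂) (v 0))) := by
  simp only [proj_eq_starProjection] at hx₁ hv ⊢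
  set Q := (reflection U₁).trans (reflection U₂)
  set T := averagedMap Q (θ / 2)
  have hvT : ∀ k, v k = T^[k] (v 0) := fun k => by
    induction k with
    | zero => rfl
    | succ k ih =>
      rw [Function.iterate_succ_apply', ← ih, hv, averagedMap_reflection_trans_reflection_apply]
  have hx₁T : (fun k => x₁ (k + 1)) = fun k => U₁.starProjection (T^[k] (v 0)) :=
    funext fun k => by rw [hx₁, hvT]
  have hT := tendsto_iterate_averagedMap Q ⟨half_pos hθ.1, by linarith [hθ.2]⟩ (v 0)
  rw [starProjection_inf_eq_starProjection_fixedSubmodule, ← tendsto_add_atTop_iff_nat 1, hx₁T]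
  exact (U₁.starProjection.continuous.tendsto _).comp hT
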